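/- Let K be a positive integer and let (μ, Ω, Λ) and (μ̃, Ω̃, Λ̃) be MSN parameters: μ, μ̃, Λ, Λ̃ ∈ ℝ^K and Ω, Ω̃ K×K positive definite, with Δ = Ω^{1/2}·Λ/√(1+ΛᵀΛ), Γ = Ω − ΔΔᵀ, and analogously Δ̃, Γ̃. Let CF and C̃F denote the corresponding MSN characteristic functions CF(t) = exp(i·tᵀμ − ½·tᵀΩt)·(1 + i·ℑ(Δᵀt)) and C̃F(t) = exp(i·tᵀμ̃ − ½·tᵀΩ̃t)·(1 + i·ℑ(Δ̃ᵀt)). For every t ∈ ℝ^K with tᵀ(Γ − Γ̃)t > 0, lim_{c→∞} CF(ct)/C̃F(ct) = 0. -/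

import Mathlib

/-!
`|CF(t)| = exp(-tᵀΓt/2) · m(Δᵀt)` with `m(x) = exp(-x²/2) |1 + iℑ(x)|` (`skewModulus`).
Since `ℑ(x)` grows like `e^{x²/2}/|x|`, `m(x)` lies between `(√π (1 + |x|))⁻¹` and `1 + |x|`.
Hence `|CF(ct)/C̃F(ct)|` is at most a quadratic polynomial in `c` times
`exp(-c² tᵀ(Γ - Γ̃)t / 2)`.
-/

open Filter Matrix

noncomputable section

/-- ℑ(x) = ∫₀ˣ √(2/π)·exp(u²/2) du. -/
def ImInt (x : ℝ) : ℝ := ∫ u in (0:ℝ)..x, Real.sqrt (2 / Real.pi) * Real.exp (u ^ 2 / 2)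

/-- The Δ parameter of MSN(μ, Ω, Λ): Δ = Ω^{1/2}·Λ/√(1+ΛᵀΛ). -/
def msnDelta {K : ℕ} (Ω : Matrix (Fin K) (Fin K) ℝ) (hΩ : Ω.PosDef)
    (Λ : Fin K → ℝ) : Fin K → ℝ :=
  (Real.sqrt (1 + Λ ⬝ᵥ Λ))⁻¹ • ((hΩ.posSemidef.1.eigenvectorUnitary : Matrix (Fin K) (Fin K) ℝ) *
      diagonal ((RCLike.ofReal : ℝ → ℝ) ∘ Real.sqrt ∘ hΩ.posSemidef.1.eigenvalues) *
      (star hΩ.posSemidef.1.eigenvectorUnitary : Matrix (Fin K) (Fin K) ℝ)).mulVec Λ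

/-- The Γ parameter of MSN(μ, Ω, Λ): Γ = Ω − ΔΔᵀ. -/
def msnGamma {K : ℕ} (Ω : Matrix (Fin K) (Fin K) ℝ) (hΩ : Ω.PosDef)
    (Λ : Fin K → ℝ) : Matrix (Fin K) (Fin K) ℝ :=
  Ω - vecMulVec (msnDelta Ω hΩ Λ) (msnDelta Ω hΩ Λ)

/-- The MSN characteristic function. -/
def msnCF {K : ℕ} (μ : Fin K → ℝ) (Ω : Matrix (Fin K) (Fin K) ℝ) (hΩ : Ω.PosDef)
    (Λ : Fin K → ℝ) (t : Fin K → ℝ) : ℂ :=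
  Complex.exp (Complex.I * ((t ⬝ᵥ μ : ℝ) : ℂ) - ((t ⬝ᵥ Ω.mulVec t / 2 : ℝ) : ℂ)) *
    (1 + Complex.I * ((ImInt (msnDelta Ω hΩ Λ ⬝ᵥ t) : ℝ) : ℂ))

open Real

lemma ImInt_neg (x : ℝ) : ImInt (-x) = -ImInt x := by
  have h_even : ∀ u : ℝ, √(2 / π) * exp ((-u) ^ 2 / 2) = √(2 / π) * exp (u ^ 2 / 2) := by
    simp
  simp only [ImInt]
  rw [← intervalIntegral.integral_congr fun u _ => h_even u, intervalIntegral.integral_comp_neg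
      (fun u => √(2 / π) * exp (u ^ 2 / 2)), neg_neg, neg_zero, intervalIntegral.integral_symm]

lemma abs_ImInt_le (x : ℝ) : |ImInt x| ≤ √(2 / π) * |x| * exp (x ^ 2 / 2) := by
  have h := intervalIntegral.norm_integral_le_of_norm_le_const (a := 0) (b := x)
    (f := fun u => √(2 / π) * exp (u ^ 2 / 2)) (C := √(2 / π) * exp (x ^ 2 / 2)) fun u hu => by
      have hu2 : u ^ 2 ≤ x ^ 2 := by
        rcases Set.mem_uIoc.mp hu with ⟨h1, h2⟩ | ⟨h1, h2⟩ <;> nlinarith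
      rw [norm_of_nonneg (by positivity)]
      gcongr
  rw [norm_eq_abs, sub_zero] at h
  simpa only [ImInt, mul_right_comm] using h

/-- Since `u ≤ x` on `[0, x]`, `x ℑ(x) ≥ ∫₀ˣ u √(2/π) e^{u²/2} du`, which is explicit. -/
lemma mul_ImInt_ge_of_nonneg {x : ℝ} (hx : 0 ≤ x) :
    √(2 / π) * (exp (x ^ 2 / 2) - 1) ≤ x * ImInt x := by
  have h_deriv : ∀ u ∈ Set.uIcc 0 x,
      HasDerivAt (fun u => √(2 / π) * exp (u ^ 2 / 2)) (u * (√(2 / π) * exp (u ^ 2 / 2))) u := by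
    intro u _
    exact (((hasDerivAt_pow 2 u).div_const 2).exp.const_mul (√(2 / π))).congr_deriv
      (by push_cast; ring)
  have h_ftc := intervalIntegral.integral_eq_sub_of_hasDerivAt h_deriv
    (by apply Continuous.intervalIntegrable; fun_prop)
  have h_mono : ∫ u in (0:ℝ)..x, u * (√(2 / π) * exp (u ^ 2 / 2))
      ≤ ∫ u in (0:ℝ)..x, x * (√(2 / π) * exp (u ^ 2 / 2)) :=
    intervalIntegral.integral_mono_on hx (by apply Continuous.intervalIntegrable; fun_prop)
      (by apply Continuous.intervalIntegrable; fun_prop)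
      fun u hu => mul_le_mul_of_nonneg_right hu.2 (by positivity)
  rw [h_ftc, intervalIntegral.integral_const_mul] at h_mono
  simpa [ImInt, mul_sub] using h_mono

lemma mul_ImInt_ge (x : ℝ) : √(2 / π) * (exp (x ^ 2 / 2) - 1) ≤ x * ImInt x := by
  rcases le_total 0 x with hx | hx
  · exact mul_ImInt_ge_of_nonneg hx
  · simpa [ImInt_neg] using mul_ImInt_ge_of_nonneg (neg_nonneg.mpr hx)

def skewModulus (x : ℝ) : ℝ := exp (-(x ^ 2 / 2)) * √(1 + ImInt x ^ 2)

lemma skewModulus_pos (x : ℝ) : 0 < skewModulus x := by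
  unfold skewModulus; positivity

lemma sqrt_two_div_pi_le_one : √(2 / π) ≤ 1 :=
  sqrt_le_one.mpr ((div_le_one pi_pos).mpr (by linarith [pi_gt_three]))

lemma skewModulus_le (x : ℝ) : skewModulus x ≤ 1 + |x| := by
  have h_sqrt : √(1 + ImInt x ^ 2) ≤ 1 + |ImInt x| := by
    rw [sqrt_le_left (by positivity)]
    nlinarith [abs_nonneg (ImInt x), sq_abs (ImInt x)]
  have h_growth : 1 + |ImInt x| ≤ (1 + |x|) * exp (x ^ 2 / 2) := by
    have h_le_exp := one_le_exp (by positivity : 0 ≤ x ^ 2 / 2)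
    have h_abs := (abs_ImInt_le x).trans
      (mul_le_mul_of_nonneg_right (mul_le_of_le_one_left (abs_nonneg x) sqrt_two_div_pi_le_one)
        (exp_pos _).le)
    nlinarith [abs_nonneg x]
  calc skewModulus x ≤ exp (-(x ^ 2 / 2)) * ((1 + |x|) * exp (x ^ 2 / 2)) := by
        unfold skewModulus; gcongr; exact h_sqrt.trans h_growth
    _ = 1 + |x| := by rw [mul_left_comm, ← exp_add, neg_add_cancel, exp_zero, mul_one]

lemma one_le_sqrt_pi_mul_skewModulus (x : ℝ) : 1 ≤ √π * (1 + |x|) * skewModulus x := by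
  have h_sqrt : 1 + |ImInt x| ≤ √2 * √(1 + ImInt x ^ 2) := by
    rw [← sqrt_mul zero_le_two, le_sqrt (by positivity) (by positivity)]
    nlinarith [sq_nonneg (|ImInt x| - 1), sq_abs (ImInt x)]
  have h_growth : √(2 / π) * exp (x ^ 2 / 2) ≤ (1 + |x|) * (1 + |ImInt x|) := by
    have := (mul_ImInt_ge x).trans ((le_abs_self _).trans (abs_mul x (ImInt x)).le)
    nlinarith [sqrt_two_div_pi_le_one, abs_nonneg x, abs_nonneg (ImInt x)]
  have h_pi : √π * √(2 / π) = √2 := by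
    rw [← sqrt_mul pi_pos.le, mul_div_cancel₀ _ pi_pos.ne']
  have h_exp : exp (x ^ 2 / 2) ≤ √π * (1 + |x|) * √(1 + ImInt x ^ 2) := by
    refine le_of_mul_le_mul_left ?_ (by positivity : (0 : ℝ) < √2)
    calc √2 * exp (x ^ 2 / 2) = √π * (√(2 / π) * exp (x ^ 2 / 2)) := by rw [← h_pi]; ring
      _ ≤ √π * ((1 + |x|) * (√2 * √(1 + ImInt x ^ 2))) :=
          mul_le_mul_of_nonneg_left (h_growth.trans (by gcongr)) (sqrt_nonneg π)
      _ = √2 * (√π * (1 + |x|) * √(1 + ImInt x ^ 2)) := by ring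
  calc (1 : ℝ) = exp (-(x ^ 2 / 2)) * exp (x ^ 2 / 2) := by rw [← exp_add, neg_add_cancel, exp_zero]
    _ ≤ exp (-(x ^ 2 / 2)) * (√π * (1 + |x|) * √(1 + ImInt x ^ 2)) := by gcongr
    _ = √π * (1 + |x|) * skewModulus x := by unfold skewModulus; ring

lemma skewModulus_div_le (x y : ℝ) :
    skewModulus x / skewModulus y ≤ √π * ((1 + |x|) * (1 + |y|)) := by
  rw [div_le_iff₀ (skewModulus_pos y)]
  calc skewModulus x ≤ (1 + |x|) * 1 := by rw [mul_one]; exact skewModulus_le x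
    _ ≤ (1 + |x|) * (√π * (1 + |y|) * skewModulus y) := by
        gcongr; exact one_le_sqrt_pi_mul_skewModulus y
    _ = √π * ((1 + |x|) * (1 + |y|)) * skewModulus y := by ring

lemma tendsto_sq_mul_exp_neg_mul_sq {b : ℝ} (hb : 0 < b) :
    Tendsto (fun c : ℝ => c ^ 2 * exp (-b * c ^ 2)) atTop (nhds 0) :=
  ((tendsto_rpow_abs_mul_exp_neg_mul_sq_cocompact hb 2).mono_left atTop_le_cocompact).congr
    fun c => by rw [rpow_two, sq_abs]

/-- For `c ≥ 1` the quotient is at most `√π (1 + |a|)(1 + |b|) c² exp(-(γ - γ') c² / 2)`. -/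
lemma tendsto_exp_mul_skewModulus_div {γ γ' a b : ℝ} (h : γ' < γ) :
    Tendsto (fun c : ℝ => exp (-(c ^ 2 * γ / 2)) * skewModulus (c * a) /
      (exp (-(c ^ 2 * γ' / 2)) * skewModulus (c * b))) atTop (nhds 0) := by
  have h_decay := (tendsto_sq_mul_exp_neg_mul_sq (half_pos (sub_pos.mpr h))).const_mul
    (√π * (1 + |a|) * (1 + |b|))
  rw [mul_zero] at h_decay
  refine squeeze_zero' (.of_forall fun c => (div_pos (mul_pos (exp_pos _) (skewModulus_pos _))
    (mul_pos (exp_pos _) (skewModulus_pos _))).le) ?_ h_decay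
  filter_upwards [eventually_ge_atTop 1] with c hc
  have h_poly : (1 + |c * a|) * (1 + |c * b|) ≤ (1 + |a|) * (1 + |b|) * c ^ 2 := by
    rw [abs_mul, abs_mul, abs_of_nonneg (by linarith : (0 : ℝ) ≤ c)]
    have hc_sq : c ≤ c ^ 2 := by nlinarith
    nlinarith [mul_le_mul_of_nonneg_right hc_sq (abs_nonneg a),
      mul_le_mul_of_nonneg_right hc_sq (abs_nonneg b)]
  calc exp (-(c ^ 2 * γ / 2)) * skewModulus (c * a) /
        (exp (-(c ^ 2 * γ' / 2)) * skewModulus (c * b))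
      = exp (-((γ - γ') / 2) * c ^ 2) * (skewModulus (c * a) / skewModulus (c * b)) := by
        rw [mul_div_mul_comm, ← exp_sub]; ring_nf
    _ ≤ exp (-((γ - γ') / 2) * c ^ 2) * (√π * ((1 + |a|) * (1 + |b|) * c ^ 2)) := by
        gcongr; exact (skewModulus_div_le _ _).trans (by gcongr)
    _ = √π * (1 + |a|) * (1 + |b|) * (c ^ 2 * exp (-((γ - γ') / 2) * c ^ 2)) := by ring

lemma dotProduct_msnGamma_mulVec {K : ℕ} (Ω : Matrix (Fin K) (Fin K) ℝ) (hΩ : Ω.PosDef)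
    (Λ t : Fin K → ℝ) :
    t ⬝ᵥ msnGamma Ω hΩ Λ *ᵥ t = t ⬝ᵥ Ω *ᵥ t - (msnDelta Ω hΩ Λ ⬝ᵥ t) ^ 2 := by
  simp [msnGamma, sub_mulVec, vecMulVec_mulVec, dotProduct_comm, sq]

lemma norm_msnCF {K : ℕ} (μ : Fin K → ℝ) (Ω : Matrix (Fin K) (Fin K) ℝ) (hΩ : Ω.PosDef)
    (Λ t : Fin K → ℝ) :
    ‖msnCF μ Ω hΩ Λ t‖ =
      exp (-(t ⬝ᵥ msnGamma Ω hΩ Λ *ᵥ t / 2)) * skewModulus (msnDelta Ω hΩ Λ ⬝ᵥ t) := by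
  have h_skew (y : ℝ) : ‖1 + Complex.I * (y : ℂ)‖ = √(1 + y ^ 2) := by
    rw [mul_comm, ← Complex.ofReal_one, Complex.norm_add_mul_I, one_pow]
  rw [msnCF, norm_mul, Complex.norm_exp, h_skew, skewModulus, ← mul_assoc, ← exp_add,
    dotProduct_msnGamma_mulVec]
  congr 2
  simp only [Complex.sub_re, Complex.mul_re, Complex.I_re, Complex.I_im, Complex.ofReal_re,
    Complex.ofReal_im]
  ring

lemma norm_msnCF_smul {K : ℕ} (μ : Fin K → ℝ) (Ω : Matrix (Fin K) (Fin K) ℝ) (hΩ : Ω.PosDef)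
    (Λ t : Fin K → ℝ) (c : ℝ) :
    ‖msnCF μ Ω hΩ Λ (c • t)‖ = exp (-(c ^ 2 * (t ⬝ᵥ msnGamma Ω hΩ Λ *ᵥ t) / 2)) *
      skewModulus (c * (msnDelta Ω hΩ Λ ⬝ᵥ t)) := by
  rw [norm_msnCF, mulVec_smul, dotProduct_smul, smul_dotProduct, dotProduct_smul, smul_eq_mul,
    smul_eq_mul, smul_eq_mul, ← mul_assoc, ← sq]

theorem stmt12_general (K : ℕ)
    (μ Λ μ' Λ' : Fin K → ℝ) (Ω Ω' : Matrix (Fin K) (Fin K) ℝ)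
    (hΩ : Ω.PosDef) (hΩ' : Ω'.PosDef) :
    ∀ t : Fin K → ℝ, 0 < t ⬝ᵥ (msnGamma Ω hΩ Λ - msnGamma Ω' hΩ' Λ').mulVec t →
      Tendsto (fun c : ℝ => msnCF μ Ω hΩ Λ (c • t) / msnCF μ' Ω' hΩ' Λ' (c • t))
        atTop (nhds 0) := by
  intro t ht
  rw [sub_mulVec, dotProduct_sub, sub_pos] at ht
  rw [tendsto_zero_iff_norm_tendsto_zero]
  refine (tendsto_exp_mul_skewModulus_div (a := msnDelta Ω hΩ Λ ⬝ᵥ t)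
    (b := msnDelta Ω' hΩ' Λ' ⬝ᵥ t) ht).congr fun c => ?_
  rw [norm_div, norm_msnCF_smul, norm_msnCF_smul]

theorem stmt12 (K : ℕ) (hK : 0 < K)
    (μ Λ μ' Λ' : Fin K → ℝ) (Ω Ω' : Matrix (Fin K) (Fin K) ℝ)
    (hΩ : Ω.PosDef) (hΩ' : Ω'.PosDef) :
    ∀ t : Fin K → ℝ, 0 < t ⬝ᵥ (msnGamma Ω hΩ Λ - msnGamma Ω' hΩ' Λ').mulVec t →
      Tendsto (fun c : ℝ => msnCF μ Ω hΩ Λ (c • t) / msnCF μ' Ω' hΩ' Λ' (c • t))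
        atTop (nhds 0) :=
  stmt12_general K μ Λ μ' Λ' Ω Ω' hΩ hΩ'
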